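/- Let a < b and a' < b', and define f = φ_{a',b'}^{−1} ∘ φ_{a,b} : (a,b) → (a',b') where φ_{a,b}(x) = −(1/(b−a))·cot(π(x−a)/(b−a)). Then f extends to a homeomorphism [a,b] → [a',b'] with f(a) = a', f(b) = b', and the extension is differentiable at a and b with derivative 1 there. -/

import Mathlib

open Set

private lemma tan_sub_pi_div_two' (θ : ℝ) :
    Real.tan (θ - Real.pi / 2) = -Real.cos θ / Real.sin θ := by
  rw [Real.tan_eq_sin_div_cos, Real.sin_sub, Real.cos_sub]
  simp

private lemma cot_pi_div_two_add' (θ : ℝ) :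
    Real.cot (Real.pi / 2 + θ) = -Real.tan θ := by
  rw [Real.cot_eq_cos_div_sin, Real.cos_add, Real.sin_add, Real.tan_eq_sin_div_cos]
  simp [neg_div]

private lemma cot_eq_neg_tan' (θ : ℝ) :
    Real.cot θ = -Real.tan (θ - Real.pi / 2) := by
  rw [tan_sub_pi_div_two', Real.cot_eq_cos_div_sin, neg_div, neg_neg]

private lemma left_identity {c u : ℝ} (hc : 0 < c) (h0 : 0 < u) (h1 : u < 1 / 2) :
    Real.pi / 2 + Real.arctan (c * Real.tan (Real.pi * u - Real.pi / 2)) =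
      Real.arctan (Real.tan (Real.pi * u) / c) := by
  have hpi := Real.pi_pos
  have hθ0 : 0 < Real.pi * u := by positivity
  have hθ1 : Real.pi * u < Real.pi / 2 := by nlinarith
  have hs : 0 < Real.sin (Real.pi * u) :=
    Real.sin_pos_of_pos_of_lt_pi hθ0 (by linarith)
  have hcos : 0 < Real.cos (Real.pi * u) :=
    Real.cos_pos_of_mem_Ioo ⟨by linarith, hθ1⟩
  have ht := tan_sub_pi_div_two' (Real.pi * u)
  have htneg : Real.tan (Real.pi * u - Real.pi / 2) < 0 := by
    rw [ht]; exact div_neg_of_neg_of_pos (by linarith) hs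
  have hct : c * Real.tan (Real.pi * u - Real.pi / 2) < 0 := mul_neg_of_pos_of_neg hc htneg
  have hinv : (c * Real.tan (Real.pi * u - Real.pi / 2))⁻¹ =
      -(Real.tan (Real.pi * u) / c) := by
    rw [ht, Real.tan_eq_sin_div_cos]
    field_simp
  have h2 := Real.arctan_inv_of_neg hct
  rw [hinv, Real.arctan_neg] at h2
  linarith

private lemma right_identity {c u : ℝ} (hc : 0 < c) (h0 : 1 / 2 < u) (h1 : u < 1) :
    Real.pi / 2 + Real.arctan (c * Real.tan (Real.pi * u - Real.pi / 2)) =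
      Real.pi + Real.arctan (Real.tan (Real.pi * (u - 1)) / c) := by
  have hpi := Real.pi_pos
  have hθ0 : Real.pi / 2 < Real.pi * u := by nlinarith
  have hθ1 : Real.pi * u < Real.pi := by nlinarith
  have hs : 0 < Real.sin (Real.pi * u) :=
    Real.sin_pos_of_pos_of_lt_pi (by linarith) hθ1
  have hcos : Real.cos (Real.pi * u) < 0 :=
    Real.cos_neg_of_pi_div_two_lt_of_lt hθ0 (by linarith)
  have ht := tan_sub_pi_div_two' (Real.pi * u)
  have htpos : 0 < Real.tan (Real.pi * u - Real.pi / 2) := by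
    rw [ht]; exact div_pos (by linarith) hs
  have hct : 0 < c * Real.tan (Real.pi * u - Real.pi / 2) := mul_pos hc htpos
  have hper : Real.tan (Real.pi * (u - 1)) = Real.tan (Real.pi * u) := by
    have : Real.pi * (u - 1) = Real.pi * u - Real.pi := by ring
    rw [this, Real.tan_sub_pi]
  have hinv : (c * Real.tan (Real.pi * u - Real.pi / 2))⁻¹ =
      -(Real.tan (Real.pi * u) / c) := by
    rw [ht, Real.tan_eq_sin_div_cos]
    field_simp
  have h2 := Real.arctan_inv_of_pos hct
  rw [hinv, Real.arctan_neg] at h2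
  rw [hper]
  linarith

set_option maxHeartbeats 1600000 in
theorem phi_conjugation_extension (a b a' b' : ℝ) (hab : a < b) (hab' : a' < b') :
    let φ : ℝ → ℝ := fun x => -(1 / (b - a)) * Real.cot (Real.pi * ((x - a) / (b - a)))
    let ψ : ℝ → ℝ := fun x => -(1 / (b' - a')) * Real.cot (Real.pi * ((x - a') / (b' - a')))
    ∃ F : ℝ → ℝ,
      (∀ x ∈ Ioo a b, F x ∈ Ioo a' b' ∧ ψ (F x) = φ x) ∧
      ContinuousOn F (Icc a b) ∧
      StrictMonoOn F (Icc a b) ∧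
      F '' (Icc a b) = Icc a' b' ∧
      F a = a' ∧ F b = b' ∧
      HasDerivWithinAt F 1 (Icc a b) a ∧
      HasDerivWithinAt F 1 (Icc a b) b := by
  intro φ ψ
  have hpi := Real.pi_pos
  have hL : (0:ℝ) < b - a := by linarith
  have hL' : (0:ℝ) < b' - a' := by linarith
  have hc : (0:ℝ) < (b' - a') / (b - a) := div_pos hL' hL
  set c : ℝ := (b' - a') / (b - a) with hcdef
  set M : ℝ → ℝ := fun x => a' + (b' - a') *
      (1 / 2 + Real.arctan (c * Real.tan (Real.pi * ((x - a) / (b - a)) - Real.pi / 2)) / Real.pi)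
    with hMdef
  set F : ℝ → ℝ := fun x => if x ≤ a then a' else if b ≤ x then b' else M x with hFdef
  have hFa : F a = a' := by simp [hFdef]
  have hFb : F b = b' := by
    simp only [hFdef]
    rw [if_neg (by linarith), if_pos le_rfl]
  have hFM : ∀ x ∈ Ioo a b, F x = M x := by
    intro x hx
    simp only [hFdef]
    rw [if_neg (by linarith [hx.1]), if_neg (by linarith [hx.2])]
  -- membership
  have hMmem : ∀ x : ℝ, M x ∈ Ioo a' b' := by
    intro x
    set A := Real.arctan (c * Real.tan (Real.pi * ((x - a) / (b - a)) - Real.pi / 2)) with hA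
    have h1 : -(Real.pi / 2) < A := Real.neg_pi_div_two_lt_arctan _
    have h2 : A < Real.pi / 2 := Real.arctan_lt_pi_div_two _
    have h3 : -(1 / 2 : ℝ) < A / Real.pi := by
      rw [lt_div_iff₀ hpi]; nlinarith
    have h4 : A / Real.pi < 1 / 2 := by
      rw [div_lt_iff₀ hpi]; nlinarith
    constructor
    · simp only [hMdef]; nlinarith
    · simp only [hMdef]; nlinarith
  -- conjugation identity
  have hψM : ∀ x : ℝ, ψ (M x) = φ x := by
    intro x
    set t := Real.tan (Real.pi * ((x - a) / (b - a)) - Real.pi / 2) with htdef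
    have e0 : (M x - a') / (b' - a') = 1 / 2 + Real.arctan (c * t) / Real.pi := by
      simp only [hMdef]
      rw [add_sub_cancel_left, mul_div_cancel_left₀ _ hL'.ne']
    have e1 : Real.pi * ((M x - a') / (b' - a')) = Real.pi / 2 + Real.arctan (c * t) := by
      rw [e0]
      field_simp
    have e2 : Real.cot (Real.pi * ((x - a) / (b - a))) = -t := by
      rw [cot_eq_neg_tan']
    simp only [ψ, φ]
    rw [e1, e2, cot_pi_div_two_add', Real.tan_arctan, hcdef]
    field_simp
  -- strict monotonicity of M on Ioo
  have hMlt : ∀ x ∈ Ioo a b, ∀ y ∈ Ioo a b, x < y → M x < M y := by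
    intro x hx y hy hxy
    have hux0 : 0 < (x - a) / (b - a) := div_pos (by linarith [hx.1]) hL
    have hux1 : (x - a) / (b - a) < 1 := (div_lt_one hL).mpr (by linarith [hx.2])
    have huy0 : 0 < (y - a) / (b - a) := div_pos (by linarith [hy.1]) hL
    have huy1 : (y - a) / (b - a) < 1 := (div_lt_one hL).mpr (by linarith [hy.2])
    have hmemx : Real.pi * ((x - a) / (b - a)) - Real.pi / 2 ∈
        Ioo (-(Real.pi / 2)) (Real.pi / 2) := ⟨by nlinarith, by nlinarith⟩
    have hmemy : Real.pi * ((y - a) / (b - a)) - Real.pi / 2 ∈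
        Ioo (-(Real.pi / 2)) (Real.pi / 2) := ⟨by nlinarith, by nlinarith⟩
    have hlt : Real.pi * ((x - a) / (b - a)) - Real.pi / 2 <
        Real.pi * ((y - a) / (b - a)) - Real.pi / 2 := by
      have : (x - a) / (b - a) < (y - a) / (b - a) := by gcongr <;> linarith
      nlinarith
    have htan := Real.strictMonoOn_tan hmemx hmemy hlt
    have harc : Real.arctan (c * Real.tan (Real.pi * ((x - a) / (b - a)) - Real.pi / 2)) <
        Real.arctan (c * Real.tan (Real.pi * ((y - a) / (b - a)) - Real.pi / 2)) :=
      Real.arctan_strictMono (by nlinarith)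
    simp only [hMdef]
    have hdiv : Real.arctan (c * Real.tan (Real.pi * ((x - a) / (b - a)) - Real.pi / 2)) / Real.pi <
        Real.arctan (c * Real.tan (Real.pi * ((y - a) / (b - a)) - Real.pi / 2)) / Real.pi := by
      gcongr
    nlinarith
  -- strict monotonicity of F on Icc
  have hmono : StrictMonoOn F (Icc a b) := by
    intro x hx y hy hxy
    rcases eq_or_lt_of_le hx.1 with h1 | h1
    · rw [← h1, hFa]
      rcases eq_or_lt_of_le hy.2 with h2 | h2
      · rw [h2, hFb]; exact hab'
      · rw [hFM y ⟨h1 ▸ hxy, h2⟩]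
        exact (hMmem y).1
    · have hxb : x < b := lt_of_lt_of_le hxy hy.2
      rw [hFM x ⟨h1, hxb⟩]
      rcases eq_or_lt_of_le hy.2 with h2 | h2
      · rw [h2, hFb]; exact (hMmem x).2
      · rw [hFM y ⟨lt_trans h1 hxy, h2⟩]
        exact hMlt x ⟨h1, hxb⟩ y ⟨lt_trans h1 hxy, h2⟩ hxy
  -- derivative at a
  have hGa : HasDerivAt (fun x => a' + ((b' - a') / Real.pi) *
      Real.arctan (Real.tan (Real.pi * ((x - a) / (b - a))) / c)) 1 a := by
    have h1 : HasDerivAt (fun x : ℝ => Real.pi * ((x - a) / (b - a)))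
        (Real.pi * (1 / (b - a))) a :=
      (((hasDerivAt_id a).sub_const a).div_const (b - a)).const_mul Real.pi
    have h2 : Real.cos (Real.pi * ((a - a) / (b - a))) ≠ 0 := by simp
    have h3 : HasDerivAt (fun x : ℝ => Real.tan (Real.pi * ((x - a) / (b - a))))
        (1 / Real.cos (Real.pi * ((a - a) / (b - a))) ^ 2 * (Real.pi * (1 / (b - a)))) a :=
      by have := (Real.hasDerivAt_tan h2).comp a h1; exact this
    have h4 := ((h3.div_const c).arctan.const_mul ((b' - a') / Real.pi)).const_add a'
    refine h4.congr_deriv ?_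
    simp only [sub_self, zero_div, mul_zero, Real.tan_zero, Real.cos_zero]
    rw [hcdef]
    field_simp
    norm_num
  have hGb : HasDerivAt (fun x => b' + ((b' - a') / Real.pi) *
      Real.arctan (Real.tan (Real.pi * ((x - b) / (b - a))) / c)) 1 b := by
    have h1 : HasDerivAt (fun x : ℝ => Real.pi * ((x - b) / (b - a)))
        (Real.pi * (1 / (b - a))) b :=
      (((hasDerivAt_id b).sub_const b).div_const (b - a)).const_mul Real.pi
    have h2 : Real.cos (Real.pi * ((b - b) / (b - a))) ≠ 0 := by simp
    have h3 : HasDerivAt (fun x : ℝ => Real.tan (Real.pi * ((x - b) / (b - a))))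
        (1 / Real.cos (Real.pi * ((b - b) / (b - a))) ^ 2 * (Real.pi * (1 / (b - a)))) b :=
      by have := (Real.hasDerivAt_tan h2).comp b h1; exact this
    have h4 := ((h3.div_const c).arctan.const_mul ((b' - a') / Real.pi)).const_add b'
    refine h4.congr_deriv ?_
    simp only [sub_self, zero_div, mul_zero, Real.tan_zero, Real.cos_zero]
    rw [hcdef]
    field_simp
    norm_num
  have hDa : HasDerivWithinAt F 1 (Icc a b) a := by
    refine (hGa.hasDerivWithinAt).congr_of_eventuallyEq ?_ ?_
    · have hnb : Iio ((a + b) / 2) ∈ nhdsWithin a (Icc a b) :=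
        nhdsWithin_le_nhds (Iio_mem_nhds (by linarith))
      filter_upwards [hnb, self_mem_nhdsWithin] with y hy1 hy2
      replace hy1 : y < (a + b) / 2 := hy1
      rcases eq_or_lt_of_le hy2.1 with h1 | h1
      · rw [← h1, hFa]; simp
      · rw [hFM y ⟨h1, by linarith⟩]
        have h0u : 0 < (y - a) / (b - a) := div_pos (by linarith) hL
        have h1u : (y - a) / (b - a) < 1 / 2 := by
          rw [div_lt_iff₀ hL]; linarith
        have key := left_identity hc h0u h1u
        simp only [hMdef]
        rw [← key]
        field_simp
    · rw [hFa]; simp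
  have hDb : HasDerivWithinAt F 1 (Icc a b) b := by
    refine (hGb.hasDerivWithinAt).congr_of_eventuallyEq ?_ ?_
    · have hnb : Ioi ((a + b) / 2) ∈ nhdsWithin b (Icc a b) :=
        nhdsWithin_le_nhds (Ioi_mem_nhds (by linarith))
      filter_upwards [hnb, self_mem_nhdsWithin] with y hy1 hy2
      replace hy1 : (a + b) / 2 < y := hy1
      rcases eq_or_lt_of_le hy2.2 with h1 | h1
      · rw [h1, hFb]; simp
      · rw [hFM y ⟨by linarith, h1⟩]
        have h0u : 1 / 2 < (y - a) / (b - a) := by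
          rw [lt_div_iff₀ hL]; linarith
        have h1u : (y - a) / (b - a) < 1 := (div_lt_one hL).mpr (by linarith)
        have key := right_identity hc h0u h1u
        have harg : (y - b) / (b - a) = (y - a) / (b - a) - 1 := by
          field_simp
          ring
        have key2 : Real.arctan (Real.tan (Real.pi * ((y - a) / (b - a) - 1)) / c) =
            Real.pi / 2 + Real.arctan (c * Real.tan (Real.pi * ((y - a) / (b - a))
              - Real.pi / 2)) - Real.pi := by linarith
        rw [harg, key2]
        simp only [hMdef]
        field_simp
        ring
    · rw [hFb]; simp
  -- continuity
  have hcont : ContinuousOn F (Icc a b) := by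
    intro x hx
    rcases eq_or_lt_of_le hx.1 with h1 | h1
    · rw [← h1]; exact hDa.continuousWithinAt
    rcases eq_or_lt_of_le hx.2 with h2 | h2
    · rw [h2]; exact hDb.continuousWithinAt
    have hux0 : 0 < (x - a) / (b - a) := div_pos (by linarith) hL
    have hux1 : (x - a) / (b - a) < 1 := (div_lt_one hL).mpr (by linarith)
    have hcos : Real.cos (Real.pi * ((x - a) / (b - a)) - Real.pi / 2) ≠ 0 :=
      (Real.cos_pos_of_mem_Ioo ⟨by nlinarith, by nlinarith⟩).ne'
    have hd1 : HasDerivAt (fun y : ℝ => Real.pi * ((y - a) / (b - a)) - Real.pi / 2)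
        (Real.pi * (1 / (b - a))) x :=
      ((((hasDerivAt_id x).sub_const a).div_const (b - a)).const_mul Real.pi).sub_const
        (Real.pi / 2)
    have hd2 : HasDerivAt (fun y : ℝ => Real.tan (Real.pi * ((y - a) / (b - a)) - Real.pi / 2))
        (1 / Real.cos (Real.pi * ((x - a) / (b - a)) - Real.pi / 2) ^ 2 *
          (Real.pi * (1 / (b - a)))) x :=
      by have := (Real.hasDerivAt_tan hcos).comp x hd1; exact this
    have hd3 := ((((hd2.const_mul c).arctan.div_const Real.pi).const_add
      (1 / 2 : ℝ)).const_mul (b' - a')).const_add a'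
    have hc3 : ContinuousAt M x := by
      simp only [hMdef]
      exact hd3.continuousAt
    have heq : F =ᶠ[nhds x] M := by
      filter_upwards [Ioo_mem_nhds h1 h2] with y hy
      exact hFM y hy
    exact (hc3.congr heq.symm).continuousWithinAt
  -- image
  have himg : F '' Icc a b = Icc a' b' := by
    apply Subset.antisymm
    · rintro _ ⟨x, hx, rfl⟩
      constructor
      · rw [← hFa]
        exact hmono.monotoneOn (left_mem_Icc.mpr hab.le) hx hx.1
      · rw [← hFb]
        exact hmono.monotoneOn hx (right_mem_Icc.mpr hab.le) hx.2
    · have := intermediate_value_Icc hab.le hcont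
      rwa [hFa, hFb] at this
  exact ⟨F, fun x hx => by rw [hFM x hx]; exact ⟨hMmem x, hψM x⟩,
    hcont, hmono, himg, hFa, hFb, hDa, hDb⟩
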